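/- A vector z* ∈ ℝ^N maximizes f over ℝ^N if and only if z* maximizes W over ℝ^N. -/

import Mathlib

/-!
For weights `g ≥ 0`, `t ≤ (∑ z_n g_n) / (1 + ∑ g_n)` iff `t ≤ ∑ (z_n - t) g_n`; in particular
`W z = ∑ (z_n - W z) ĝ_n(z_n)`. Raising every price `z_n < W z` to `W z` therefore does not
decrease `W` (and strictly increases it if some price was below `W z`). Once all prices are
at least `W z`, every term `(z_n - t) G^n` is monotone in `G^n`, so the worst case over `A` is
attained coordinatewise and `f (z ⊔ W z) ≥ W z`. Together with `f ≤ W` (take the coordinatewise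
minimisers) this shows that `f` and `W` have the same maximisers. Positivity of `G^n`, needed
for the strict increase, is Euler's identity `G(Y) = ∑ Y_i ∂_i G(Y)`.
-/

/-- `G^n(Y^n | z, a^n, b^n) = G^n((exp(a_i − b_i (z + c_i)))_{i ∈ V_n})` where the
partition `V_n = {i | part i = n}`. -/
noncomputable def GzP (m N : ℕ) (part : Fin m → Fin N)
    (Gn : ∀ n : Fin N, ({i : Fin m // part i = n} → ℝ) → ℝ)
    (c : Fin m → ℝ) (n : Fin N) (z : ℝ)
    (ab : ({i : Fin m // part i = n} → ℝ) × ({i : Fin m // part i = n} → ℝ)) : ℝ :=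
  Gn n fun i => Real.exp (ab.1 i - ab.2 i * (z + c i.1))

/-- `ĝ_n(z) = min_{(a^n, b^n) ∈ A^n} G^n(Y^n | z, a^n, b^n)`. -/
noncomputable def ghatP (m N : ℕ) (part : Fin m → Fin N)
    (Gn : ∀ n : Fin N, ({i : Fin m // part i = n} → ℝ) → ℝ)
    (c : Fin m → ℝ)
    (An : ∀ n : Fin N,
      Set (({i : Fin m // part i = n} → ℝ) × ({i : Fin m // part i = n} → ℝ)))
    (n : Fin N) (z : ℝ) : ℝ :=
  sInf (GzP m N part Gn c n z '' An n)

/-- `ρ(z, a, b)` for a full parameter profile `ab = ((a^n, b^n))_n`. -/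
noncomputable def rhoP (m N : ℕ) (part : Fin m → Fin N)
    (Gn : ∀ n : Fin N, ({i : Fin m // part i = n} → ℝ) → ℝ)
    (c : Fin m → ℝ) (z : Fin N → ℝ)
    (ab : ∀ n : Fin N,
      ({i : Fin m // part i = n} → ℝ) × ({i : Fin m // part i = n} → ℝ)) : ℝ :=
  (∑ n, z n * GzP m N part Gn c n (z n) (ab n)) /
    (1 + ∑ n, GzP m N part Gn c n (z n) (ab n))

/-- Robust objective `f(z) = min_{(a,b) ∈ A} ρ(z, a, b)` with `A = A^1 × ⋯ × A^N`. -/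
noncomputable def fP (m N : ℕ) (part : Fin m → Fin N)
    (Gn : ∀ n : Fin N, ({i : Fin m // part i = n} → ℝ) → ℝ)
    (c : Fin m → ℝ)
    (An : ∀ n : Fin N,
      Set (({i : Fin m // part i = n} → ℝ) × ({i : Fin m // part i = n} → ℝ)))
    (z : Fin N → ℝ) : ℝ :=
  sInf (rhoP m N part Gn c z ''
    {ab : ∀ n : Fin N,
        ({i : Fin m // part i = n} → ℝ) × ({i : Fin m // part i = n} → ℝ) |
      ∀ n, ab n ∈ An n})

/-- Reduced objective `W(z) = (Σ_n z_n ĝ_n(z_n)) / (1 + Σ_l ĝ_l(z_l))`. -/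
noncomputable def WP (m N : ℕ) (part : Fin m → Fin N)
    (Gn : ∀ n : Fin N, ({i : Fin m // part i = n} → ℝ) → ℝ)
    (c : Fin m → ℝ)
    (An : ∀ n : Fin N,
      Set (({i : Fin m // part i = n} → ℝ) × ({i : Fin m // part i = n} → ℝ)))
    (z : Fin N → ℝ) : ℝ :=
  (∑ n, z n * ghatP m N part Gn c An n (z n)) /
    (1 + ∑ l, ghatP m N part Gn c An l (z l))

open Finset

namespace RobustPricing

variable {ι : Type*}

section MinAttraction

variable {P : ι → Type*} (g : ∀ n, ℝ → P n → ℝ) (S : ∀ n, Set (P n))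

noncomputable def minAttraction (n : ι) (x : ℝ) : ℝ := sInf (g n x '' S n)

variable {g S}

lemma minAttraction_le (hg : ∀ n x p, 0 ≤ g n x p) {n : ι} (x : ℝ) {p : P n} (hp : p ∈ S n) :
    minAttraction g S n x ≤ g n x p :=
  csInf_le ⟨0, by rintro _ ⟨q, -, rfl⟩; exact hg n x q⟩ (Set.mem_image_of_mem _ hp)

lemma minAttraction_eq {n : ι} {x : ℝ} {p : P n} (hp : p ∈ S n) (hmin : IsMinOn (g n x) (S n) p) :
    minAttraction g S n x = g n x p :=
  IsLeast.csInf_eq ⟨Set.mem_image_of_mem _ hp, by rintro _ ⟨q, hq, rfl⟩; exact hmin hq⟩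

lemma minAttraction_pos (hg : ∀ n x p, 0 < g n x p)
    (hmin : ∀ n x, ∃ p ∈ S n, IsMinOn (g n x) (S n) p) (n : ι) (x : ℝ) :
    0 < minAttraction g S n x := by
  obtain ⟨p, hp, hpmin⟩ := hmin n x
  exact minAttraction_eq hp hpmin ▸ hg n x p

end MinAttraction

variable [Fintype ι]

noncomputable def revenue (w g : ι → ℝ) : ℝ := (∑ n, w n * g n) / (1 + ∑ n, g n)

lemma sum_sub_mul_eq (w g : ι → ℝ) (t : ℝ) :
    ∑ n, (w n - t) * g n = ∑ n, w n * g n - t * ∑ n, g n := by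
  simp only [sub_mul, sum_sub_distrib, mul_sum]

lemma one_add_sum_pos {g : ι → ℝ} (hg : ∀ n, 0 ≤ g n) : 0 < 1 + ∑ n, g n := by
  linarith [sum_nonneg fun n (_ : n ∈ univ) => hg n]

lemma le_revenue_iff {w g : ι → ℝ} {t : ℝ} (hg : ∀ n, 0 ≤ g n) :
    t ≤ revenue w g ↔ t ≤ ∑ n, (w n - t) * g n := by
  rw [revenue, le_div_iff₀ (one_add_sum_pos hg), sum_sub_mul_eq]
  constructor <;> intro h <;> linarith

lemma lt_revenue_iff {w g : ι → ℝ} {t : ℝ} (hg : ∀ n, 0 ≤ g n) :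
    t < revenue w g ↔ t < ∑ n, (w n - t) * g n := by
  rw [revenue, lt_div_iff₀ (one_add_sum_pos hg), sum_sub_mul_eq]
  constructor <;> intro h <;> linarith

lemma sum_sub_revenue_mul {w g : ι → ℝ} (hg : ∀ n, 0 ≤ g n) :
    ∑ n, (w n - revenue w g) * g n = revenue w g := by
  have h := div_mul_cancel₀ (∑ n, w n * g n) (one_add_sum_pos hg).ne'
  rw [← revenue] at h
  rw [sum_sub_mul_eq]
  linarith

lemma neg_sum_abs_le_revenue (w : ι → ℝ) {g : ι → ℝ} (hg : ∀ n, 0 ≤ g n) :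
    -∑ n, |w n| ≤ revenue w g := by
  refine (le_revenue_iff hg).2 ((neg_nonpos.2 (sum_nonneg fun n _ => abs_nonneg _)).trans ?_)
  refine sum_nonneg fun n _ => mul_nonneg (sub_nonneg.2 ?_) (hg n)
  calc -∑ k, |w k| ≤ -|w n| :=
        neg_le_neg (single_le_sum (fun k _ => abs_nonneg (w k)) (mem_univ n))
    _ ≤ w n := neg_abs_le _

lemma le_revenue_of_le {w g g' : ι → ℝ} {t : ℝ} (htw : ∀ n, t ≤ w n) (hg : ∀ n, 0 ≤ g n)
    (hgg' : ∀ n, g n ≤ g' n) (h : t ≤ revenue w g) : t ≤ revenue w g' := by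
  rw [le_revenue_iff hg] at h
  rw [le_revenue_iff fun n => (hg n).trans (hgg' n)]
  exact h.trans (sum_le_sum fun n _ => mul_le_mul_of_nonneg_left (hgg' n) (sub_nonneg.2 (htw n)))

lemma sub_mul_le_max_sub_mul {h : ℝ → ℝ} {x : ℝ} (hx : 0 ≤ h x) (t : ℝ) :
    (x - t) * h x ≤ (max x t - t) * h (max x t) := by
  rcases le_total t x with htx | hxt
  · rw [max_eq_left htx]
  · rw [max_eq_right hxt, sub_self, zero_mul]
    exact mul_nonpos_of_nonpos_of_nonneg (sub_nonpos.2 hxt) hx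

lemma sub_mul_lt_max_sub_mul {h : ℝ → ℝ} {x t : ℝ} (hx : 0 < h x) (hxt : x < t) :
    (x - t) * h x < (max x t - t) * h (max x t) := by
  rw [max_eq_right hxt.le, sub_self, zero_mul]
  exact mul_neg_of_neg_of_pos (sub_neg.2 hxt) hx

lemma revenue_le_revenue_max {h : ι → ℝ → ℝ} (hh : ∀ n x, 0 ≤ h n x) {w : ι → ℝ} {t : ℝ}
    (ht : revenue w (fun n => h n (w n)) = t) :
    t ≤ revenue (fun n => max (w n) t) (fun n => h n (max (w n) t)) := by
  rw [le_revenue_iff fun n => hh n _]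
  calc t = ∑ n, (w n - t) * h n (w n) := ht ▸ (sum_sub_revenue_mul fun n => hh n _).symm
    _ ≤ _ := sum_le_sum fun n _ => sub_mul_le_max_sub_mul (hh n (w n)) t

lemma revenue_lt_revenue_max {h : ι → ℝ → ℝ} (hh : ∀ n x, 0 < h n x) {w : ι → ℝ} {t : ℝ}
    (ht : revenue w (fun n => h n (w n)) = t) (hw : ∃ n, w n < t) :
    t < revenue (fun n => max (w n) t) (fun n => h n (max (w n) t)) := by
  obtain ⟨n₀, hn₀⟩ := hw
  rw [lt_revenue_iff fun n => (hh n _).le]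
  calc t = ∑ n, (w n - t) * h n (w n) := ht ▸ (sum_sub_revenue_mul fun n => (hh n _).le).symm
    _ < _ := sum_lt_sum (fun n _ => sub_mul_le_max_sub_mul (hh n (w n)).le t)
      ⟨n₀, mem_univ _, sub_mul_lt_max_sub_mul (hh n₀ (w n₀)) hn₀⟩

section Robust

variable {P : ι → Type*} (g : ∀ n, ℝ → P n → ℝ) (S : ∀ n, Set (P n))

noncomputable def robustRevenue (z : ι → ℝ) : ℝ :=
  sInf ((fun p : ∀ n, P n => revenue z fun n => g n (z n) (p n)) '' {p | ∀ n, p n ∈ S n})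

noncomputable def reducedRevenue (z : ι → ℝ) : ℝ := revenue z fun n => minAttraction g S n (z n)

variable {g S}

lemma robustRevenue_le_reducedRevenue (hg : ∀ n x p, 0 < g n x p)
    (hmin : ∀ n x, ∃ p ∈ S n, IsMinOn (g n x) (S n) p) (z : ι → ℝ) :
    robustRevenue g S z ≤ reducedRevenue g S z := by
  choose p hp hpmin using fun n => hmin n (z n)
  have hbdd : BddBelow ((fun p : ∀ n, P n => revenue z fun n => g n (z n) (p n)) ''
      {p | ∀ n, p n ∈ S n}) :=
    ⟨_, by rintro _ ⟨q, -, rfl⟩; exact neg_sum_abs_le_revenue z fun n => (hg n _ _).le⟩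
  calc robustRevenue g S z ≤ revenue z fun n => g n (z n) (p n) :=
        csInf_le hbdd ⟨p, hp, rfl⟩
    _ = reducedRevenue g S z := by
        simp only [reducedRevenue, fun n => minAttraction_eq (hp n) (hpmin n)]

lemma reducedRevenue_le_robustRevenue_max (hg : ∀ n x p, 0 < g n x p)
    (hmin : ∀ n x, ∃ p ∈ S n, IsMinOn (g n x) (S n) p) (z : ι → ℝ) :
    reducedRevenue g S z ≤
      robustRevenue g S (fun n => max (z n) (reducedRevenue g S z)) := by
  choose p hp _ using fun n => hmin n 0
  refine le_csInf ⟨_, p, hp, rfl⟩ ?_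
  rintro _ ⟨p, hp, rfl⟩
  refine le_revenue_of_le (fun n => le_max_right _ _)
    (fun n => (minAttraction_pos hg hmin n _).le)
    (fun n => minAttraction_le (fun n x p => (hg n x p).le) _ (hp n)) ?_
  exact revenue_le_revenue_max (h := minAttraction g S)
    (fun n x => (minAttraction_pos hg hmin n x).le) rfl

lemma reducedRevenue_le_robustRevenue (hg : ∀ n x p, 0 < g n x p)
    (hmin : ∀ n x, ∃ p ∈ S n, IsMinOn (g n x) (S n) p) {z : ι → ℝ}
    (hz : ∀ n, reducedRevenue g S z ≤ z n) :
    reducedRevenue g S z ≤ robustRevenue g S z := by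
  simpa only [max_eq_left (hz _)] using reducedRevenue_le_robustRevenue_max hg hmin z

lemma reducedRevenue_lt_reducedRevenue_max (hg : ∀ n x p, 0 < g n x p)
    (hmin : ∀ n x, ∃ p ∈ S n, IsMinOn (g n x) (S n) p) {z : ι → ℝ}
    (hz : ∃ n, z n < reducedRevenue g S z) :
    reducedRevenue g S z < reducedRevenue g S (fun n => max (z n) (reducedRevenue g S z)) :=
  revenue_lt_revenue_max (minAttraction_pos hg hmin) rfl hz

theorem forall_robustRevenue_le_iff (hg : ∀ n x p, 0 < g n x p)
    (hmin : ∀ n x, ∃ p ∈ S n, IsMinOn (g n x) (S n) p) (zs : ι → ℝ) :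
    (∀ z, robustRevenue g S z ≤ robustRevenue g S zs) ↔
      (∀ z, reducedRevenue g S z ≤ reducedRevenue g S zs) := by
  constructor
  · intro hzs z
    calc reducedRevenue g S z
        ≤ robustRevenue g S (fun n => max (z n) (reducedRevenue g S z)) :=
          reducedRevenue_le_robustRevenue_max hg hmin z
      _ ≤ robustRevenue g S zs := hzs _
      _ ≤ reducedRevenue g S zs := robustRevenue_le_reducedRevenue hg hmin zs
  · intro hzs z
    have hzs_ge : ∀ n, reducedRevenue g S zs ≤ zs n := by
      by_contra! h
      exact (reducedRevenue_lt_reducedRevenue_max hg hmin h).not_ge (hzs _)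
    calc robustRevenue g S z ≤ reducedRevenue g S z := robustRevenue_le_reducedRevenue hg hmin z
      _ ≤ reducedRevenue g S zs := hzs z
      _ ≤ robustRevenue g S zs := reducedRevenue_le_robustRevenue hg hmin hzs_ge

end Robust

end RobustPricing

lemma HasFDerivAt.apply_self_eq_of_homogeneous {E : Type*} [NormedAddCommGroup E]
    [NormedSpace ℝ E] {G : E → ℝ} {G' : E →L[ℝ] ℝ} {Y : E} (hG : HasFDerivAt G G' Y)
    (hhom : ∀ lam : ℝ, 0 < lam → G (lam • Y) = lam * G Y) : G' Y = G Y := by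
  have hline : HasDerivAt (fun lam : ℝ => G (lam • Y)) (G' Y) 1 := by
    have hsmul : HasDerivAt (fun lam : ℝ => lam • Y) Y 1 := by
      simpa using (hasDerivAt_id (1 : ℝ)).smul_const Y
    exact (one_smul ℝ Y ▸ hG).comp_hasDerivAt 1 hsmul
  have heq : (fun lam : ℝ => lam * G Y) =ᶠ[nhds 1] fun lam => G (lam • Y) :=
    Filter.eventually_of_mem (Ioi_mem_nhds one_pos) fun lam hlam => (hhom lam hlam).symm
  exact (hline.congr_of_eventuallyEq heq).unique (by simpa using hasDerivAt_mul_const (G Y))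

lemma ContinuousLinearMap.apply_eq_sum_mul_single {ι : Type*} [Fintype ι] [DecidableEq ι]
    (L : (ι → ℝ) →L[ℝ] ℝ) (Y : ι → ℝ) : L Y = ∑ i, Y i * L (Pi.single i 1) := by
  conv_lhs => rw [← univ_sum_single Y, map_sum]
  refine sum_congr rfl fun i _ => ?_
  rw [← smul_eq_mul, ← map_smul, ← Pi.single_smul', smul_eq_mul, mul_one]

lemma pos_of_homogeneous_of_partial_pos {ι : Type*} [Fintype ι] [Nonempty ι] [DecidableEq ι]
    {G : (ι → ℝ) → ℝ} {Y : ι → ℝ} (hG : DifferentiableAt ℝ G Y)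
    (hhom : ∀ lam : ℝ, 0 < lam → G (lam • Y) = lam * G Y) (hY : ∀ i, 0 < Y i)
    (hd : ∀ i, 0 < fderiv ℝ G Y (Pi.single i 1)) : 0 < G Y := by
  rw [← hG.hasFDerivAt.apply_self_eq_of_homogeneous hhom,
    ContinuousLinearMap.apply_eq_sum_mul_single]
  exact sum_pos (fun i _ => mul_pos (hY i) (hd i)) univ_nonempty

lemma isOpen_setOf_forall_pos {ι : Type*} [Finite ι] : IsOpen {Y : ι → ℝ | ∀ i, 0 < Y i} := by
  simp only [Set.ofPred_forall]
  exact isOpen_iInter_of_finite fun i => isOpen_lt continuous_const (continuous_apply i)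

section Partition

variable {m N : ℕ} {part : Fin m → Fin N} {Gn : ∀ n : Fin N, ({i : Fin m // part i = n} → ℝ) → ℝ}

lemma GzP_pos (hpart : ∀ n : Fin N, ∃ i, part i = n)
    (hGsmooth : ∀ n, ContDiffOn ℝ 2 (Gn n) {Y : {i : Fin m // part i = n} → ℝ | ∀ i, 0 < Y i})
    (hGhom : ∀ n, ∀ lam : ℝ, 0 < lam → ∀ Y : {i : Fin m // part i = n} → ℝ,
      (∀ i, 0 < Y i) → Gn n (lam • Y) = lam * Gn n Y)
    (hGd1 : ∀ n, ∀ Y : {i : Fin m // part i = n} → ℝ, (∀ i, 0 < Y i) →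
      ∀ i, 0 < fderiv ℝ (Gn n) Y (Pi.single i 1))
    (c : Fin m → ℝ) (n : Fin N) (z : ℝ)
    (ab : ({i : Fin m // part i = n} → ℝ) × ({i : Fin m // part i = n} → ℝ)) :
    0 < GzP m N part Gn c n z ab := by
  obtain ⟨i, hi⟩ := hpart n
  have : Nonempty {i : Fin m // part i = n} := ⟨⟨i, hi⟩⟩
  have hY : ∀ i, 0 < Real.exp (ab.1 i - ab.2 i * (z + c i.1)) := fun i => Real.exp_pos _
  have hdiff := ((hGsmooth n).contDiffAt (isOpen_setOf_forall_pos.mem_nhds hY)).differentiableAt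
    two_ne_zero
  exact pos_of_homogeneous_of_partial_pos hdiff (fun lam hlam => hGhom n lam hlam _ hY) hY
    (hGd1 n _ hY)

lemma exists_isMinOn_GzP
    (hGsmooth : ∀ n, ContDiffOn ℝ 2 (Gn n) {Y : {i : Fin m // part i = n} → ℝ | ∀ i, 0 < Y i})
    (c : Fin m → ℝ)
    {An : ∀ n : Fin N,
      Set (({i : Fin m // part i = n} → ℝ) × ({i : Fin m // part i = n} → ℝ))}
    (hAne : ∀ n, (An n).Nonempty) (hAcomp : ∀ n, IsCompact (An n)) (n : Fin N) (z : ℝ) :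
    ∃ ab ∈ An n, IsMinOn (GzP m N part Gn c n z) (An n) ab := by
  have hY : Continuous fun ab : ({i : Fin m // part i = n} → ℝ) × ({i : Fin m // part i = n} → ℝ) =>
      fun i => Real.exp (ab.1 i - ab.2 i * (z + c i.1)) := by fun_prop
  exact (hAcomp n).exists_isMinOn (hAne n) <|
    (hGsmooth n).continuousOn.comp hY.continuousOn fun ab _ i => Real.exp_pos _

end Partition

theorem stmt_10_general
    (m N : ℕ)
    (part : Fin m → Fin N) (hpart : ∀ n : Fin N, ∃ i, part i = n)
    (Gn : ∀ n : Fin N, ({i : Fin m // part i = n} → ℝ) → ℝ)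
    (hGsmooth : ∀ n, ContDiffOn ℝ 2 (Gn n)
      {Y : {i : Fin m // part i = n} → ℝ | ∀ i, 0 < Y i})
    (hGhom : ∀ n, ∀ lam : ℝ, 0 < lam → ∀ Y : {i : Fin m // part i = n} → ℝ,
      (∀ i, 0 < Y i) → Gn n (lam • Y) = lam * Gn n Y)
    (hGd1 : ∀ n, ∀ Y : {i : Fin m // part i = n} → ℝ, (∀ i, 0 < Y i) →
      ∀ i, 0 < fderiv ℝ (Gn n) Y (Pi.single i 1))
    (An : ∀ n : Fin N,
      Set (({i : Fin m // part i = n} → ℝ) × ({i : Fin m // part i = n} → ℝ)))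
    (hAne : ∀ n, (An n).Nonempty)
    (hAcomp : ∀ n, IsCompact (An n))
    (c : Fin m → ℝ) :
    ∀ zs : Fin N → ℝ,
      (∀ z : Fin N → ℝ, fP m N part Gn c An z ≤ fP m N part Gn c An zs) ↔
      (∀ z : Fin N → ℝ, WP m N part Gn c An z ≤ WP m N part Gn c An zs) :=
  -- `fP` and `WP` unfold to `robustRevenue` and `reducedRevenue` for `g = GzP m N part Gn c`
  RobustPricing.forall_robustRevenue_le_iff (GzP_pos hpart hGsmooth hGhom hGd1 c)
    (exists_isMinOn_GzP hGsmooth c hAne hAcomp)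

/-- `z*` maximizes the robust objective `f` over `ℝ^N` if and only
if it maximizes the reduced objective `W` over `ℝ^N`. -/
theorem stmt_10
    (m N : ℕ) (hN : 1 ≤ N)
    (part : Fin m → Fin N) (hpart : ∀ n : Fin N, ∃ i, part i = n)
    (Gn : ∀ n : Fin N, ({i : Fin m // part i = n} → ℝ) → ℝ)
    (hGnonneg : ∀ n, ∀ Y : {i : Fin m // part i = n} → ℝ,
      (∀ i, 0 < Y i) → 0 ≤ Gn n Y)
    (hGsmooth : ∀ n, ContDiffOn ℝ 2 (Gn n)
      {Y : {i : Fin m // part i = n} → ℝ | ∀ i, 0 < Y i})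
    (hGhom : ∀ n, ∀ lam : ℝ, 0 < lam → ∀ Y : {i : Fin m // part i = n} → ℝ,
      (∀ i, 0 < Y i) → Gn n (lam • Y) = lam * Gn n Y)
    (hGd1 : ∀ n, ∀ Y : {i : Fin m // part i = n} → ℝ, (∀ i, 0 < Y i) →
      ∀ i, 0 < fderiv ℝ (Gn n) Y (Pi.single i 1))
    (hGd2 : ∀ n, ∀ Y : {i : Fin m // part i = n} → ℝ, (∀ i, 0 < Y i) →
      ∀ i j, i ≠ j →
        fderiv ℝ (fun W => fderiv ℝ (Gn n) W (Pi.single i 1)) Y (Pi.single j 1) ≤ 0)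
    (An : ∀ n : Fin N,
      Set (({i : Fin m // part i = n} → ℝ) × ({i : Fin m // part i = n} → ℝ)))
    (hAne : ∀ n, (An n).Nonempty) (hAconv : ∀ n, Convex ℝ (An n))
    (hAcomp : ∀ n, IsCompact (An n))
    (hAb : ∀ n, ∀ ab ∈ An n, ∃ β : ℝ, 0 < β ∧ ∀ i, ab.2 i = β)
    (c : Fin m → ℝ) (hc : ∀ i, 0 ≤ c i) :
    ∀ zs : Fin N → ℝ,
      (∀ z : Fin N → ℝ, fP m N part Gn c An z ≤ fP m N part Gn c An zs) ↔
      (∀ z : Fin N → ℝ, WP m N part Gn c An z ≤ WP m N part Gn c An zs) :=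
  stmt_10_general m N part hpart Gn hGsmooth hGhom hGd1 An hAne hAcomp c
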